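/- arXiv:2601.08547 — 7 statements merged into one kernel-verified Lean document; each statement's English description precedes it below -/
import Mathlib

section
/- Let p(x) = a_n x^n + ... + a_0 be a complex polynomial of degree n ≥ 1 and let T := max{|||p|||_1, 1}, where |||p|||_1 is the sum of absolute values of the coefficients. Then there exist linear polynomials u_1, ..., u_n ∈ ℂ[x] of degree at most 1 such that p = sgn(a_n) · u_1 · ... · u_n and |||u_i|||_1 ≤ 6 n T for all i. -/
/-!
Write `p = a_n ∏ (X - r_i)`. The Mahler measure satisfies
`M(p) = |a_n| ∏ max(1, |r_i|) ≤ |||p|||₁ ≤ T`. Distribute `|a_n|` over the monic factors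
with weights `c_i = M(p)^{1/n} / max(1, |r_i|)`, so that `u_i = c_i (X - r_i)` has
`|||u_i|||₁ = c_i (1 + |r_i|) ≤ 2 c_i max(1, |r_i|) = 2 M(p)^{1/n} ≤ 2 T`.
-/

open Polynomial Finset

theorem Multiset.exists_fin_map_eq {α : Type*} (s : Multiset α) {n : ℕ} (hs : card s = n) :
    ∃ r : Fin n → α, univ.val.map r = s := by
  subst hs
  refine ⟨fun i => s.toList.get (i.cast s.length_toList.symm), ?_⟩
  rw [Fin.univ_val_map, List.ofFn_congr s.length_toList.symm]
  simp only [Fin.cast_cast, Fin.cast_eq_self, List.ofFn_get, Multiset.coe_toList]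

theorem Real.exists_prod_eq_and_mul_eq {ι : Type*} [Fintype ι] (hι : Fintype.card ι ≠ 0)
    {A : ℝ} (hA : 0 < A) (m : ι → ℝ) (hm : ∀ i, 0 < m i) :
    ∃ c : ι → ℝ, (∀ i, 0 < c i) ∧ ∏ i, c i = A ∧
      ∀ i, c i * m i = (A * ∏ i, m i) ^ (Fintype.card ι : ℝ)⁻¹ := by
  set t := (A * ∏ i, m i) ^ (Fintype.card ι : ℝ)⁻¹
  have hm_prod : 0 < ∏ i, m i := prod_pos fun i _ => hm i
  refine ⟨fun i => t / m i, fun i => div_pos (by positivity) (hm i), ?_,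
    fun i => div_mul_cancel₀ t (hm i).ne'⟩
  rw [prod_div_distrib, prod_const, card_univ,
    Real.rpow_inv_natCast_pow (mul_pos hA hm_prod).le hι, mul_div_cancel_right₀ _ hm_prod.ne']

namespace Polynomial

theorem sum_norm_coeff_C_mul_X_sub_C (c r : ℂ) :
    (C c * (X - C r)).sum (fun _ a => ‖a‖) = ‖c‖ * (1 + ‖r‖) := by
  have hdeg : (C c * (X - C r)).natDegree < 2 := by
    have := natDegree_mul_le (p := C c) (q := X - C r)
    simp only [natDegree_C, natDegree_X_sub_C, zero_add] at this
    omega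
  rw [sum_over_range' _ (fun _ => norm_zero) 2 hdeg]
  simp only [mul_sub, coeff_sub, coeff_C_mul, coeff_X, mul_ite, mul_one, mul_zero, coeff_mul_C,
    coeff_C, ite_mul, zero_mul, sum_range_succ, range_one, sum_singleton, one_ne_zero, ↓reduceIte,
    zero_sub, norm_neg, Complex.norm_mul, sub_zero]
  ring

theorem exists_fin_roots (p : ℂ[X]) :
    ∃ r : Fin p.natDegree → ℂ, p = C p.leadingCoeff * ∏ i, (X - C (r i)) ∧
      p.mahlerMeasure = ‖p.leadingCoeff‖ * ∏ i, max 1 ‖r i‖ := by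
  obtain ⟨r, hr⟩ :=
    p.roots.exists_fin_map_eq (IsAlgClosed.splits p).natDegree_eq_card_roots.symm
  refine ⟨r, ?_, ?_⟩
  · conv_lhs => rw [(IsAlgClosed.splits p).eq_prod_roots, ← hr, Multiset.map_map]
    rw [prod_map_val]
    rfl
  · rw [mahlerMeasure_eq_leadingCoeff_mul_prod_roots, ← hr, Multiset.map_map, prod_map_val]
    rfl

theorem exists_linear_factors_sum_norm_coeff_le (p : ℂ[X]) (hp : p.natDegree ≠ 0) :
    ∃ u : Fin p.natDegree → ℂ[X], (∀ i, (u i).degree ≤ 1) ∧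
      p = C (p.leadingCoeff / (‖p.leadingCoeff‖ : ℂ)) * ∏ i, u i ∧
      ∀ i, (u i).sum (fun _ a => ‖a‖) ≤ 2 * p.mahlerMeasure ^ (p.natDegree : ℝ)⁻¹ := by
  have hlc : 0 < ‖p.leadingCoeff‖ :=
    norm_pos_iff.mpr (leadingCoeff_ne_zero.mpr (ne_zero_of_natDegree_gt (Nat.pos_of_ne_zero hp)))
  obtain ⟨r, hp_eq, hM⟩ := p.exists_fin_roots
  obtain ⟨c, hc_pos, hc_prod, hc_mul⟩ := Real.exists_prod_eq_and_mul_eq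
    (by simpa using hp) hlc (fun i => max 1 ‖r i‖) (fun _ => by positivity)
  simp only [Fintype.card_fin, ← hM] at hc_mul
  refine ⟨fun i => C (c i : ℂ) * (X - C (r i)), fun i => ?_, ?_, fun i => ?_⟩
  · rw [degree_C_mul (by exact_mod_cast (hc_pos i).ne'), degree_X_sub_C]
  · rw [prod_mul_distrib, ← map_prod, ← Complex.ofReal_prod, hc_prod, ← mul_assoc, ← C_mul,
      div_mul_cancel₀ _ (by exact_mod_cast hlc.ne')]
    exact hp_eq
  · rw [sum_norm_coeff_C_mul_X_sub_C, Complex.norm_real, Real.norm_of_nonneg (hc_pos i).le,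
      ← hc_mul i]
    have h_le : 1 + ‖r i‖ ≤ 2 * max 1 ‖r i‖ := by
      linarith [le_max_left 1 ‖r i‖, le_max_right 1 ‖r i‖]
    nlinarith [hc_pos i, h_le]

end Polynomial

/-- A complex polynomial `p` of degree `n ≥ 1` factors as `sgn(a_n) · u_1 ⋯ u_n`
with linear factors whose 1-norms are bounded by `6 n T`, `T = max{|||p|||₁, 1}`. -/
theorem stmt_2 (p : Polynomial ℂ) (n : ℕ) (hn : 1 ≤ n) (hdeg : p.natDegree = n) :
    ∃ u : Fin n → Polynomial ℂ,
      (∀ i, (u i).degree ≤ 1) ∧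
      p = Polynomial.C (p.leadingCoeff / (‖p.leadingCoeff‖ : ℂ)) * ∏ i, u i ∧
      ∀ i, ∑ j ∈ (u i).support, ‖(u i).coeff j‖ ≤
        6 * n * max (∑ j ∈ p.support, ‖p.coeff j‖) 1 := by
  subst hdeg
  obtain ⟨u, hu_deg, hp_eq, hu_norm⟩ := p.exists_linear_factors_sum_norm_coeff_le (by omega)
  refine ⟨u, hu_deg, hp_eq, fun i => ?_⟩
  set T := max (∑ j ∈ p.support, ‖p.coeff j‖) 1
  have hM : p.mahlerMeasure ≤ T := (mahlerMeasure_le_sum_norm_coeff p).trans (le_max_left _ _)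
  have hn' : (1 : ℝ) ≤ p.natDegree := by exact_mod_cast hn
  calc ∑ j ∈ (u i).support, ‖(u i).coeff j‖
      ≤ 2 * p.mahlerMeasure ^ (p.natDegree : ℝ)⁻¹ := hu_norm i
    _ ≤ 2 * T ^ (p.natDegree : ℝ)⁻¹ := by gcongr; exact p.mahlerMeasure_nonneg
    _ ≤ 2 * T := by
      gcongr
      exact Real.rpow_le_self_of_one_le (le_max_right _ _) (inv_le_one_of_one_le₀ hn')
    _ ≤ 6 * p.natDegree * T := by
      nlinarith [le_max_right (∑ j ∈ p.support, ‖p.coeff j‖) 1]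
end

section
/- Let z_1, ..., z_n be the complex roots (with multiplicity) of a monic polynomial x^n + c_{n-1} x^{n-1} + ... + c_0, ordered so that |z_1| ≥ ... ≥ |z_n|, and suppose |z_i| ≥ 1 exactly for i ≤ r and |z_i| < 1 for i > r, with B := max{1, max_i |c_i|}. Then the product of the r largest roots satisfies |z_1 · ... · z_r| ≤ 3 B n^r. -/
/-!
Reversing `p` gives `∏ i < n, (1 - z_i X)`. Since `1 - z X` has inverse `∑ z^k X^k` in power
series, `∏ i < r, (1 - z_i X) = rev p · ∏ r ≤ i < n, ∑ z_i^k X^k`, and comparing coefficients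
of `X^r` writes `±z_1 ⋯ z_r` as `∑_{a + b = r} c_{n-a} h_b`. For `|z_i| ≤ 1` the coefficients
`h_b` of the product of `n - r` geometric series are at most `(n - r)^b` in modulus, so
`|z_1 ⋯ z_r| ≤ B ∑_{b ≤ r} (n - r)^b ≤ B (n - r + 1)^r ≤ B n^r`.
-/

open Polynomial Finset

namespace Polynomial

variable {R ι : Type*} [CommRing R]

theorem reflect_one_X_sub_C (w : R) : (X - C w).reflect 1 = 1 - C w * X := by
  simp [reflect_sub, reflect_C]

theorem reflect_card_prod_X_sub_C (s : Finset ι) (z : ι → R) :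
    (∏ i ∈ s, (X - C (z i))).reflect #s = ∏ i ∈ s, (1 - C (z i) * X) := by
  classical
  induction s using Finset.induction_on with
  | empty => simp
  | insert a s ha ih =>
    have hdeg : (∏ i ∈ s, (X - C (z i))).natDegree ≤ #s :=
      (natDegree_prod_le _ _).trans <| by
        simpa using sum_le_sum fun i (_ : i ∈ s) => natDegree_X_sub_C_le (z i)
    rw [prod_insert ha, prod_insert ha, card_insert_of_notMem ha, add_comm,
      reflect_mul _ _ (natDegree_X_sub_C_le _) hdeg, reflect_one_X_sub_C, ih]

theorem coeff_card_prod_one_sub_C_mul_X (s : Finset ι) (z : ι → R) :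
    (∏ i ∈ s, (1 - C (z i) * X)).coeff #s = ∏ i ∈ s, -z i := by
  rw [← reflect_card_prod_X_sub_C, coeff_reflect, revAt_le le_rfl, Nat.sub_self,
    coeff_zero_eq_eval_zero, eval_prod]
  simp

end Polynomial

theorem geom_sum_range_succ_le_add_one_pow {R : Type*} [CommSemiring R] [PartialOrder R]
    [IsOrderedRing R] {c : R} (hc : 0 ≤ c) (m : ℕ) :
    ∑ j ∈ range (m + 1), c ^ j ≤ (c + 1) ^ m := by
  rw [add_pow]
  refine sum_le_sum fun j hj => ?_
  rw [one_pow, mul_one]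
  have hchoose : (1 : R) ≤ (m.choose j : R) := by
    exact_mod_cast Nat.mono_cast (Nat.choose_pos (Nat.lt_succ_iff.mp (mem_range.mp hj)))
  exact le_mul_of_one_le_right (pow_nonneg hc j) hchoose

namespace PowerSeries

variable {R ι : Type*}

theorem coe_one_sub_C_mul_X_mul_mk_pow [CommRing R] (w : R) :
    ((1 - Polynomial.C w * Polynomial.X : R[X]) : R⟦X⟧) * mk (w ^ ·) = 1 := by
  rw [Polynomial.coe_sub, Polynomial.coe_one, Polynomial.coe_mul, Polynomial.coe_C,
    Polynomial.coe_X, sub_mul, one_mul, mul_assoc]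
  ext (_ | k) <;> simp [coeff_succ_X_mul, coeff_one, pow_succ, mul_comm]

theorem coe_prod_one_sub_C_mul_X_eq_mul_prod_mk_pow [CommRing R] [DecidableEq ι] (z : ι → R)
    {s t : Finset ι} (hst : s ⊆ t) :
    ((∏ i ∈ s, (1 - Polynomial.C (z i) * Polynomial.X) : R[X]) : R⟦X⟧) =
      ((∏ i ∈ t, (1 - Polynomial.C (z i) * Polynomial.X) : R[X]) : R⟦X⟧) *
        ∏ i ∈ t \ s, mk (z i ^ ·) := by
  simp only [← Polynomial.coeToPowerSeries.ringHom_apply, map_prod]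
  rw [← prod_sdiff hst, mul_comm (∏ i ∈ t \ s, _), mul_assoc, ← prod_mul_distrib]
  simp only [Polynomial.coeToPowerSeries.ringHom_apply, coe_one_sub_C_mul_X_mul_mk_pow,
    prod_const_one, mul_one]

theorem norm_coeff_prod_mk_pow_le [NormedCommRing R] [NormOneClass R] (s : Finset ι)
    (z : ι → R) (hz : ∀ i ∈ s, ‖z i‖ ≤ 1) (m : ℕ) :
    ‖coeff m (∏ i ∈ s, mk (z i ^ ·))‖ ≤ (#s : ℝ) ^ m := by
  classical
  induction s using Finset.induction_on generalizing m with
  | empty => cases m <;> simp [coeff_one]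
  | insert a s ha ih =>
    rw [prod_insert ha, mul_comm, coeff_mul, card_insert_of_notMem ha, Nat.cast_succ]
    have hterm : ∀ q ∈ antidiagonal m,
        ‖coeff q.1 (∏ i ∈ s, mk (z i ^ ·)) * coeff q.2 (mk (z a ^ ·))‖ ≤ (#s : ℝ) ^ q.1 := by
      intro q _
      rw [coeff_mk]
      calc _ ≤ ‖coeff q.1 (∏ i ∈ s, mk (z i ^ ·))‖ * ‖z a‖ ^ q.2 :=
            norm_mul_le_of_le le_rfl (norm_pow_le _ _)
        _ ≤ (#s : ℝ) ^ q.1 * 1 := by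
          gcongr
          · exact ih (fun i hi => hz i (mem_insert_of_mem hi)) _
          · exact pow_le_one₀ (norm_nonneg _) (hz a (mem_insert_self a s))
        _ = _ := mul_one _
    calc _ ≤ ∑ q ∈ antidiagonal m, (#s : ℝ) ^ q.1 := (norm_sum_le _ _).trans (sum_le_sum hterm)
      _ = ∑ j ∈ range (m + 1), (#s : ℝ) ^ j := Nat.sum_antidiagonal_eq_sum_range_succ_mk _ _
      _ ≤ _ := geom_sum_range_succ_le_add_one_pow (Nat.cast_nonneg _) m

end PowerSeries

section

variable {K ι : Type*} [NormedField K] [DecidableEq ι]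

theorem norm_prod_le_mul_card_pow_of_norm_coeff_le (z : ι → K) {s t : Finset ι} (hst : s ⊆ t)
    (hz : ∀ i ∈ t \ s, ‖z i‖ ≤ 1) {B : ℝ}
    (hB : ∀ a ≤ #s, ‖(∏ i ∈ t, (X - C (z i))).coeff (#t - a)‖ ≤ B) :
    ‖∏ i ∈ s, z i‖ ≤ B * (#t : ℝ) ^ #s := by
  set G := ∏ i ∈ t \ s, PowerSeries.mk (z i ^ ·)
  set Q := ∏ i ∈ t, (1 - C (z i) * X) with hQ_def
  have hQ : ∀ b ≤ #s, ‖Q.coeff b‖ ≤ B := fun b hb => by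
    rw [hQ_def, ← reflect_card_prod_X_sub_C, coeff_reflect,
      revAt_le (hb.trans (card_le_card hst))]
    exact hB b hb
  have hB0 : 0 ≤ B := (norm_nonneg _).trans (hQ 0 (Nat.zero_le _))
  have hcoeff : ‖∏ i ∈ s, z i‖ = ‖PowerSeries.coeff (#s) (G * (Q : PowerSeries K))‖ := by
    rw [mul_comm, ← PowerSeries.coe_prod_one_sub_C_mul_X_eq_mul_prod_mk_pow z hst,
      coeff_coe, coeff_card_prod_one_sub_C_mul_X, norm_prod, norm_prod]
    simp_rw [norm_neg]
  have hcard : ((#(t \ s) : ℝ) + 1) ^ #s ≤ (#t : ℝ) ^ #s := by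
    rcases (#s).eq_zero_or_pos with h | h
    · simp [h]
    · have := card_sdiff_add_card_eq_card hst
      gcongr
      exact_mod_cast (by omega : #(t \ s) + 1 ≤ #t)
  calc ‖∏ i ∈ s, z i‖ ≤ ∑ q ∈ antidiagonal #s, (#(t \ s) : ℝ) ^ q.1 * B := by
        rw [hcoeff, PowerSeries.coeff_mul]
        refine (norm_sum_le _ _).trans (sum_le_sum fun q hq => norm_mul_le_of_le ?_ ?_)
        · exact PowerSeries.norm_coeff_prod_mk_pow_le _ _ hz _
        · rw [coeff_coe]
          exact hQ _ (HasAntidiagonal.antidiagonal.snd_le hq)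
    _ = (∑ j ∈ range (#s + 1), (#(t \ s) : ℝ) ^ j) * B := by
        rw [sum_mul, Nat.sum_antidiagonal_eq_sum_range_succ_mk]
    _ ≤ (#t : ℝ) ^ #s * B := by
        gcongr
        exact (geom_sum_range_succ_le_add_one_pow (Nat.cast_nonneg _) _).trans hcard
    _ = B * (#t : ℝ) ^ #s := mul_comm _ _

end

/-- For a monic complex polynomial of degree `n ≥ 1` with roots `z_1, …, z_n`
ordered by decreasing modulus, where exactly the first `r` roots have modulus `≥ 1`,
the product of the `r` largest roots is bounded by `3 B n^r`,
with `B = max{1, max_i |c_i|}` over the non-leading coefficients. -/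
theorem stmt_3 (n r : ℕ) (hn : 1 ≤ n) (z : ℕ → ℂ)
    (p : Polynomial ℂ)
    (hp : p = ∏ i ∈ Finset.range n, (Polynomial.X - Polynomial.C (z i)))
    (hrn : r ≤ n)
    (hr : ∀ i < n, (1 ≤ ‖z i‖ ↔ i < r)) :
    ‖∏ i ∈ Finset.range r, z i‖ ≤
      3 * (max 1 ((Finset.range n).sup' (Finset.nonempty_range_iff.mpr (by omega))
        (fun i => ‖p.coeff i‖))) * (n : ℝ) ^ r := by
  set B := max 1 ((range n).sup' (nonempty_range_iff.mpr (by omega)) fun i => ‖p.coeff i‖)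
  have hsmall : ∀ i ∈ range n \ range r, ‖z i‖ ≤ 1 := by
    intro i hi
    simp only [mem_sdiff, mem_range] at hi
    exact le_of_not_ge fun h => hi.2 ((hr i hi.1).mp h)
  have hcoeff : ∀ a ≤ #(range r), ‖p.coeff (#(range n) - a)‖ ≤ B := by
    intro a _
    rw [card_range]
    rcases a.eq_zero_or_pos with rfl | ha
    · have hlead : p.coeff n = 1 := by
        simpa [hp] using (monic_prod_X_sub_C z (range n)).coeff_natDegree
      rw [Nat.sub_zero, hlead, norm_one]
      exact le_max_left _ _
    · exact (le_sup' (fun i => ‖p.coeff i‖) (mem_range.mpr (by omega))).trans (le_max_right _ _)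
  have hbound := norm_prod_le_mul_card_pow_of_norm_coeff_le z (range_subset_range.mpr hrn) hsmall
    (hp ▸ hcoeff)
  rw [card_range, card_range] at hbound
  have hB : 0 ≤ B := zero_le_one.trans (le_max_left _ _)
  nlinarith [pow_nonneg (Nat.cast_nonneg n : (0 : ℝ) ≤ n) r]
end

section
/- The composition of N convolutional maps α_1, ..., α_N (without padding), where α_i has filter width k_i and stride s_i, is itself a convolutional map with stride s_v = Π_{i=1}^N s_i and filter width k_v = k_1 + Σ_{i=2}^N (k_i - 1) Π_{m=1}^{i-1} s_m. -/
/-! After `convMap k₁ s₁ w₁`, the layer `convMap k₂ s₂ w₂` makes output `j` read input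
`j s₁ s₂ + (n s₁ + p)` with weight `w₂ n * w₁ p` for `n < k₂`, `p < k₁`. Collecting the weights
by offset `q = n s₁ + p < k₁ + (k₂ - 1) s₁` shows that two layers compose to one of stride `s₁ s₂`;
induction on the number of layers gives the general width and stride. -/

/-- A convolution (no padding) with filter `w`, width `k` and stride `s`,
acting on signals indexed by `ℕ` (0-based): `(α x) j = ∑_{n<k} w n · x (j·s + n)`. -/
def convMap (k s : ℕ) (w : ℕ → ℝ) (x : ℕ → ℝ) : ℕ → ℝ :=
  fun j => ∑ n ∈ Finset.range k, w n * x (j * s + n)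

/-- The composition `α_{N-1} ∘ ⋯ ∘ α_0` of the first `N` convolutional layers. -/
def convComp (k s : ℕ → ℕ) (w : ℕ → ℕ → ℝ) : ℕ → (ℕ → ℝ) → (ℕ → ℝ)
  | 0 => id
  | N + 1 => fun x => convMap (k N) (s N) (w N) (convComp k s w N x)

open Finset

def convMap.compFilter (k₁ s₁ k₂ : ℕ) (w₁ w₂ : ℕ → ℝ) (q : ℕ) : ℝ :=
  ∑ n ∈ range k₂, ∑ p ∈ range k₁, if n * s₁ + p = q then w₂ n * w₁ p else 0

theorem convMap_convMap_apply_eq_sum (k₁ s₁ k₂ s₂ : ℕ) (w₁ w₂ x : ℕ → ℝ) (j : ℕ) :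
    convMap k₂ s₂ w₂ (convMap k₁ s₁ w₁ x) j =
      ∑ n ∈ range k₂, ∑ p ∈ range k₁, w₂ n * w₁ p * x (j * (s₁ * s₂) + (n * s₁ + p)) := by
  refine sum_congr rfl fun n _ => ?_
  rw [convMap, mul_sum]
  refine sum_congr rfl fun p _ => ?_
  rw [← mul_assoc]
  congr 2
  ring

theorem convMap_convMap (k₁ s₁ k₂ s₂ : ℕ) (w₁ w₂ : ℕ → ℝ) (x : ℕ → ℝ) :
    convMap k₂ s₂ w₂ (convMap k₁ s₁ w₁ x) =
      convMap (k₁ + (k₂ - 1) * s₁) (s₁ * s₂) (convMap.compFilter k₁ s₁ k₂ w₁ w₂) x := by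
  funext j
  rw [convMap_convMap_apply_eq_sum, eq_comm]
  simp only [convMap, convMap.compFilter, sum_mul, ite_mul, zero_mul]
  rw [sum_comm]
  refine sum_congr rfl fun n hn => ?_
  rw [sum_comm]
  refine sum_congr rfl fun p hp => ?_
  have hn : n * s₁ ≤ (k₂ - 1) * s₁ :=
    Nat.mul_le_mul_right _ (Nat.le_pred_of_lt (mem_range.mp hn))
  have hp : p < k₁ := mem_range.mp hp
  rw [sum_ite_eq, if_pos (mem_range.mpr (by omega))]

theorem stmt_4_general (N : ℕ) (hN : 1 ≤ N) (k s : ℕ → ℕ)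
    (w : ℕ → ℕ → ℝ) :
    ∃ v : ℕ → ℝ, ∀ x j,
      convComp k s w N x j =
        ∑ n ∈ Finset.range
            (k 0 + ∑ i ∈ Finset.Ico 1 N, (k i - 1) * ∏ m ∈ Finset.range i, s m),
          v n * x (j * (∏ i ∈ Finset.range N, s i) + n) := by
  induction N, hN using Nat.le_induction with
  | base => exact ⟨w 0, fun x j => by simp [convComp, convMap]⟩
  | succ N hN ih =>
    obtain ⟨v, hv⟩ := ih
    set K := k 0 + ∑ i ∈ Ico 1 N, (k i - 1) * ∏ m ∈ range i, s m
    set S := ∏ i ∈ range N, s i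
    refine ⟨convMap.compFilter K S (k N) v (w N), fun x j => ?_⟩
    have hcomp : convComp k s w N x = convMap K S v x := funext (hv x)
    rw [sum_Ico_succ_top hN, prod_range_succ, ← add_assoc]
    change convMap (k N) (s N) (w N) (convComp k s w N x) j = _
    rw [hcomp, convMap_convMap]
    rfl

/-- The composition of `N ≥ 1` convolutions with widths `k_i` and strides `s_i`
is itself a convolution, with stride `∏ s_i` and filter width
`k_1 + ∑_{i=2}^N (k_i - 1) ∏_{m<i} s_m` (0-indexed here). -/
theorem stmt_4 (N : ℕ) (hN : 1 ≤ N) (k s : ℕ → ℕ)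
    (hk : ∀ i, 1 ≤ k i) (hs : ∀ i, 1 ≤ s i) (w : ℕ → ℕ → ℝ) :
    ∃ v : ℕ → ℝ, ∀ x j,
      convComp k s w N x j =
        ∑ n ∈ Finset.range
            (k 0 + ∑ i ∈ Finset.Ico 1 N, (k i - 1) * ∏ m ∈ Finset.range i, s m),
          v n * x (j * (∏ i ∈ Finset.range N, s i) + n) :=
  stmt_4_general N hN k s w
end

section
/- Let w^(1), ..., w^(N) be filters of an LCN with architecture (d, k, s), and let v be the final filter of the composed convolution with width k_v. Then the polynomial p_{k_v - 1}(v)(x) = Σ_{j=0}^{k_v - 1} v_{j+1} x^j factorizes as the product over i = 1,...,N of the polynomials p̃_i(x) = Σ_{j=0}^{k_i - 1} w^(i)_{j+1} · x^{j · Π_{n=1}^{i-1} s_n}. -/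
/-- The polynomial `p̃_i(x) = ∑_{j<k_i} w^(i)_{j+1} x^{j ∏_{n<i} s_n}` associated
with the `i`-th layer filter. -/
noncomputable def lcnPoly (k s : ℕ → ℕ) (w : ℕ → ℕ → ℝ) (i : ℕ) : Polynomial ℝ :=
  ∑ j ∈ Finset.range (k i),
    Polynomial.C (w i j) * Polynomial.X ^ (j * ∏ m ∈ Finset.range i, s m)

open Finset Polynomial

section

variable (k s : ℕ → ℕ) (w : ℕ → ℕ → ℝ)

lemma eval_lcnPoly (i : ℕ) (t : ℝ) :
    (lcnPoly k s w i).eval t = ∑ j ∈ range (k i), w i j * t ^ (j * ∏ m ∈ range i, s m) := by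
  simp [lcnPoly, eval_finsetSum]

lemma convComp_geometric (t : ℝ) (N j : ℕ) :
    convComp k s w N (fun n => t ^ n) j =
      t ^ (j * ∏ i ∈ range N, s i) * ∏ i ∈ range N, (lcnPoly k s w i).eval t := by
  induction N generalizing j with
  | zero => simp [convComp]
  | succ N ih =>
    simp only [convComp, convMap, ih, prod_range_succ, eval_lcnPoly, mul_sum]
    refine sum_congr rfl fun n _ => ?_
    rw [show (j * s N + n) * ∏ i ∈ range N, s i =
        j * ((∏ i ∈ range N, s i) * s N) + n * ∏ i ∈ range N, s i by ring, pow_add]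
    ring

end

theorem stmt_5_general (N : ℕ) (k s : ℕ → ℕ)
    (w : ℕ → ℕ → ℝ)
    (kv : ℕ)
    (v : ℕ → ℝ)
    (hv : ∀ x j, convComp k s w N x j =
      ∑ n ∈ Finset.range kv, v n * x (j * (∏ i ∈ Finset.range N, s i) + n)) :
    ∑ j ∈ Finset.range kv, Polynomial.C (v j) * Polynomial.X ^ j =
      ∏ i ∈ Finset.range N, lcnPoly k s w i := by
  refine Polynomial.funext fun t => ?_
  have h := hv (fun n => t ^ n) 0
  rw [convComp_geometric] at h
  simp only [zero_mul, pow_zero, one_mul, zero_add] at h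
  simp [eval_finsetSum, eval_prod, ← h]

/-- If `v` is the final filter of the composed convolution (of width `k_v`),
then the polynomial `∑_{j<k_v} v_{j+1} x^j` factorizes as the product of the
layer polynomials `p̃_i`. -/
theorem stmt_5 (N : ℕ) (hN : 1 ≤ N) (k s : ℕ → ℕ)
    (hk : ∀ i, 1 ≤ k i) (hs : ∀ i, 1 ≤ s i) (w : ℕ → ℕ → ℝ)
    (kv : ℕ)
    (hkv : kv = k 0 + ∑ i ∈ Finset.Ico 1 N, (k i - 1) * ∏ m ∈ Finset.range i, s m)
    (v : ℕ → ℝ)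
    (hv : ∀ x j, convComp k s w N x j =
      ∑ n ∈ Finset.range kv, v n * x (j * (∏ i ∈ Finset.range N, s i) + n)) :
    ∑ j ∈ Finset.range kv, Polynomial.C (v j) * Polynomial.X ^ j =
      ∏ i ∈ Finset.range N, lcnPoly k s w i :=
  stmt_5_general N k s w kv v hv
end

section
/- Let L be a continuously differentiable loss function of the filter vector w = (w^(1), ..., w^(N)) of an LCN that is invariant under the rescalings (w^(i), w^(j)) ↦ ((1/κ) w^(i), κ w^(j)) for all κ > 0 and i ≠ j. If w(t) solves the gradient flow dw/dt = -∇L(w(t)) on an interval I, then for every pair i, j the difference δ_ij(t) := ‖w^(i)(t)‖_2² - ‖w^(j)(t)‖_2² is constant in t. -/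
/-! Differentiating the invariance `L (blockScale κ u) = L u` at `κ = 1` gives the Euler-type
identity `⟪∇L u, u⁽ⁱ⁾⟫ = ⟪∇L u, u⁽ʲ⁾⟫`. Along the gradient flow
`d/dt ‖w⁽ⁱ⁾‖² = -2 ⟪∇L w, w⁽ⁱ⁾⟫`, so the derivative of `δᵢⱼ` vanishes on the convex set `I`,
and `δᵢⱼ` is constant there by the mean value inequality. -/
open scoped RealInnerProductSpace
open Filter Topology

theorem Finset.sum_filter_sigma_fst_eq {ι M : Type*} [Fintype ι] [DecidableEq ι] {κ : ι → Type*}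
    [∀ i, Fintype (κ i)] [AddCommMonoid M] (f : (Σ i, κ i) → M) (i : ι) :
    ∑ p with p.1 = i, f p = ∑ n, f ⟨i, n⟩ := by
  rw [Finset.sum_filter, Fintype.sum_sigma, Fintype.sum_eq_single i fun a ha => by simp [ha]]
  simp

theorem Convex.is_const_of_hasDerivAt_eq_zero {s : Set ℝ} (hs : Convex ℝ s) {f : ℝ → ℝ}
    (hf : ∀ x ∈ s, HasDerivAt f 0 x) {x y : ℝ} (hx : x ∈ s) (hy : y ∈ s) : f x = f y := by
  have := hs.norm_image_sub_le_of_norm_hasDerivWithin_le (C := 0)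
    (fun z hz => (hf z hz).hasDerivWithinAt) (fun _ _ => by simp) hx hy
  simpa [sub_eq_zero, eq_comm] using this

theorem inner_gradient_eq_zero_of_eventually_const {E : Type*} [NormedAddCommGroup E]
    [InnerProductSpace ℝ E] [CompleteSpace E] {L : E → ℝ} {c : ℝ → E} {x : ℝ} {v : E}
    (hL : DifferentiableAt ℝ L (c x)) (hc : HasDerivAt c v x)
    (hconst : ∀ᶠ y in 𝓝 x, L (c y) = L (c x)) : ⟪gradient L (c x), v⟫ = 0 := by
  have hcomp := hL.hasGradientAt.hasFDerivAt.comp_hasDerivAt x hc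
  rw [InnerProductSpace.toDual_apply_apply] at hcomp
  exact hcomp.unique ((hasDerivAt_const x (L (c x))).congr_of_eventuallyEq hconst)

section BlockScale

variable {ι β : Type*} [DecidableEq β] (blk : ι → β) (i j : β)

/-- With coordinates grouped into layers by `blk`, the rescaling
`(u⁽ⁱ⁾, u⁽ʲ⁾) ↦ (u⁽ⁱ⁾ / κ, κ u⁽ʲ⁾)`. -/
noncomputable def blockScale (κ : ℝ) (u : EuclideanSpace ℝ ι) : EuclideanSpace ℝ ι :=
  WithLp.toLp 2 fun p => if blk p = i then u p / κ else if blk p = j then κ * u p else u p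

theorem blockScale_one (u : EuclideanSpace ℝ ι) : blockScale blk i j 1 u = u := by
  ext p; simp [blockScale]

variable [Fintype ι]

theorem hasDerivAt_blockScale_one (u : EuclideanSpace ℝ ι) :
    HasDerivAt (fun κ => blockScale blk i j κ u)
      (WithLp.toLp 2 fun p => if blk p = i then -u p else if blk p = j then u p else 0) 1 := by
  have hcoord : HasDerivAt
      (fun κ : ℝ => fun p => if blk p = i then u p / κ else if blk p = j then κ * u p else u p)
      (fun p => if blk p = i then -u p else if blk p = j then u p else 0) 1 := by
    refine hasDerivAt_pi.2 fun p => ?_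
    split_ifs
    · simpa [div_eq_mul_inv] using (hasDerivAt_inv one_ne_zero).const_mul (u p)
    · simpa using (hasDerivAt_id (1 : ℝ)).mul_const (u p)
    · exact hasDerivAt_const _ _
  exact (PiLp.continuousLinearEquiv 2 ℝ _).symm.hasFDerivAt.comp_hasDerivAt 1 hcoord

variable {blk i j}

theorem sum_gradient_mul_eq_of_blockScale_invariant {L : EuclideanSpace ℝ ι → ℝ}
    {u : EuclideanSpace ℝ ι} (hL : DifferentiableAt ℝ L u) (hij : i ≠ j)
    (hinv : ∀ κ : ℝ, 0 < κ → L (blockScale blk i j κ u) = L u) :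
    ∑ p with blk p = i, gradient L u p * u p = ∑ p with blk p = j, gradient L u p * u p := by
  have hcurve := blockScale_one blk i j u
  have horth := inner_gradient_eq_zero_of_eventually_const (hcurve ▸ hL)
    (hasDerivAt_blockScale_one blk i j u) <| by
      filter_upwards [eventually_gt_nhds one_pos] with κ hκ
      rw [hinv κ hκ, hcurve]
  rw [hcurve, PiLp.inner_apply] at horth
  have hsplit : ∑ p, ⟪gradient L u p, (WithLp.toLp 2 fun p =>
      if blk p = i then -u p else if blk p = j then u p else 0 : EuclideanSpace ℝ ι) p⟫ =
      ∑ p with blk p = j, gradient L u p * u p - ∑ p with blk p = i, gradient L u p * u p := by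
    rw [Finset.sum_filter, Finset.sum_filter, ← Finset.sum_sub_distrib]
    refine Finset.sum_congr rfl fun p _ => ?_
    by_cases hi : blk p = i
    · simp [hi, hij, mul_comm]
    · by_cases hj : blk p = j <;> simp [hi, hj, hij.symm, mul_comm]
  linarith

theorem hasDerivAt_sum_sq_apply {w : ℝ → EuclideanSpace ℝ ι} {w' : EuclideanSpace ℝ ι} {t : ℝ}
    (hw : HasDerivAt w w' t) (s : Finset ι) :
    HasDerivAt (fun t => ∑ p ∈ s, w t p ^ 2) (2 * ∑ p ∈ s, w' p * w t p) t := by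
  rw [Finset.mul_sum]
  refine HasDerivAt.fun_sum fun p _ => ?_
  have hcoord : HasDerivAt (fun t => w t p) (w' p) t :=
    (PiLp.hasFDerivAt_apply (𝕜 := ℝ) (p := 2) (w t) p).comp_hasDerivAt t hw
  exact (hcoord.fun_pow 2).congr_deriv (by push_cast; ring)

theorem sum_sq_sub_sum_sq_eq_of_gradientFlow {L : EuclideanSpace ℝ ι → ℝ}
    (hL : Differentiable ℝ L) (hij : i ≠ j)
    (hinv : ∀ κ : ℝ, 0 < κ → ∀ u, L (blockScale blk i j κ u) = L u)
    {I : Set ℝ} (hI : Convex ℝ I) {w : ℝ → EuclideanSpace ℝ ι}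
    (hw : ∀ t ∈ I, HasDerivAt w (-gradient L (w t)) t) {t₁ t₂ : ℝ} (ht₁ : t₁ ∈ I) (ht₂ : t₂ ∈ I) :
    ∑ p with blk p = i, w t₁ p ^ 2 - ∑ p with blk p = j, w t₁ p ^ 2 =
      ∑ p with blk p = i, w t₂ p ^ 2 - ∑ p with blk p = j, w t₂ p ^ 2 := by
  refine hI.is_const_of_hasDerivAt_eq_zero
    (f := fun t => ∑ p with blk p = i, w t p ^ 2 - ∑ p with blk p = j, w t p ^ 2)
    (fun t ht => ?_) ht₁ ht₂
  have hbal := sum_gradient_mul_eq_of_blockScale_invariant (hL (w t)) hij fun κ hκ => hinv κ hκ (w t)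
  refine ((hasDerivAt_sum_sq_apply (hw t ht) {p | blk p = i}).fun_sub
    (hasDerivAt_sum_sq_apply (hw t ht) {p | blk p = j})).congr_deriv ?_
  simp [hbal]

end BlockScale

/-- Balancedness: if `L` is a C¹ loss on the concatenated filter space of an LCN
that is invariant under the rescalings `(w^(i), w^(j)) ↦ ((1/κ) w^(i), κ w^(j))`
for `κ > 0`, and `w(t)` solves the gradient flow `dw/dt = -∇L(w(t))` on an
interval `I`, then `δ_ij(t) = ‖w^(i)(t)‖₂² - ‖w^(j)(t)‖₂²` is constant on `I`. -/
theorem stmt_7 (N : ℕ) (k : Fin N → ℕ)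
    (L : EuclideanSpace ℝ ((i : Fin N) × Fin (k i)) → ℝ)
    (hL : ContDiff ℝ 1 L)
    (hinv : ∀ (i j : Fin N), i ≠ j → ∀ κ : ℝ, 0 < κ →
      ∀ u : EuclideanSpace ℝ ((i : Fin N) × Fin (k i)),
        L (WithLp.toLp 2 (fun p => if p.1 = i then u p / κ else if p.1 = j then κ * u p else u p)) = L u)
    (I : Set ℝ) (hI : Convex ℝ I)
    (w : ℝ → EuclideanSpace ℝ ((i : Fin N) × Fin (k i)))
    (hw : ∀ t ∈ I, HasDerivAt w (-(gradient L (w t))) t) :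
    ∀ (i j : Fin N), ∀ t₁ ∈ I, ∀ t₂ ∈ I,
      (∑ n : Fin (k i), (w t₁ ⟨i, n⟩) ^ 2) - (∑ n : Fin (k j), (w t₁ ⟨j, n⟩) ^ 2) =
        (∑ n : Fin (k i), (w t₂ ⟨i, n⟩) ^ 2) - (∑ n : Fin (k j), (w t₂ ⟨j, n⟩) ^ 2) := by
  intro i j t₁ ht₁ t₂ ht₂
  rcases eq_or_ne i j with rfl | hij
  · simp
  simpa only [Finset.sum_filter_sigma_fst_eq] using
    sum_sq_sub_sum_sq_eq_of_gradientFlow (blk := Sigma.fst) (hL.differentiable one_ne_zero) hij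
      (hinv i j hij) hI hw ht₁ ht₂
end

section
/- Let w = (w^(1), ..., w^(N)) be LCN filters with final filter v = π(w) satisfying ‖v‖_1 ≤ T, and set δ_i := ‖w^(i+1)‖_2² - ‖w^(i)‖_2². Then there exists a constant τ depending only on T, the final filter width k_v, and δ_1, ..., δ_{N-1}, such that ‖w^(i)‖_2² ≤ τ for all i = 1, ..., N. -/
open Polynomial Finset

namespace Polynomial

lemma mapMahlerMeasure_prod {A ι : Type*} [CommSemiring A] (v : A →+* ℂ) (s : Finset ι)
    (p : ι → A[X]) :
    (∏ i ∈ s, p i).mapMahlerMeasure v = ∏ i ∈ s, (p i).mapMahlerMeasure v := by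
  induction s using Finset.cons_induction with
  | empty => simp
  | cons i s hi ih => rw [prod_cons, prod_cons, mapMahlerMeasure_mul, ih]

variable {A : Type*} [NormedCommRing A] {v : A →+* ℂ}

lemma sum_norm_sq_coeff_le (hv : Isometry v) {p : A[X]} {K : ℕ} (hp : p.natDegree < K) :
    ∑ n ∈ range K, ‖p.coeff n‖ ^ 2 ≤ K * 4 ^ K * p.mapMahlerMeasure v ^ 2 := by
  have hcoeff (n : ℕ) : ‖p.coeff n‖ ≤ 2 ^ K * p.mapMahlerMeasure v := by
    have hchoose : (p.natDegree.choose n : ℝ) ≤ 2 ^ K := by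
      exact_mod_cast (Nat.choose_le_two_pow _ _).trans (Nat.pow_le_pow_right two_pos hp.le)
    grw [norm_coeff_le_choose_mul_mapMahlerMeasure v hv, hchoose]
    exact mapMahlerMeasure_nonneg p v
  calc ∑ n ∈ range K, ‖p.coeff n‖ ^ 2
      ≤ ∑ _n ∈ range K, (2 ^ K * p.mapMahlerMeasure v) ^ 2 :=
        sum_le_sum fun n _ => pow_le_pow_left₀ (norm_nonneg _) (hcoeff n) 2
    _ = K * 4 ^ K * p.mapMahlerMeasure v ^ 2 := by
        rw [sum_const, card_range, nsmul_eq_mul, mul_pow, ← pow_mul, pow_mul']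
        norm_num [mul_assoc]

lemma prod_sum_norm_sq_coeff_le {ι : Type*} (hv : Isometry v) (s : Finset ι) (p : ι → A[X])
    {K : ℕ} (hp : ∀ i ∈ s, (p i).natDegree < K) :
    ∏ i ∈ s, ∑ n ∈ range K, ‖(p i).coeff n‖ ^ 2 ≤
      (K * 4 ^ K) ^ #s * ((∏ i ∈ s, p i).sum fun _ a => ‖a‖) ^ 2 := by
  calc ∏ i ∈ s, ∑ n ∈ range K, ‖(p i).coeff n‖ ^ 2
      ≤ ∏ i ∈ s, (K * 4 ^ K * (p i).mapMahlerMeasure v ^ 2) :=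
        prod_le_prod (fun i _ => by positivity) fun i hi => sum_norm_sq_coeff_le hv (hp i hi)
    _ = (K * 4 ^ K) ^ #s * (∏ i ∈ s, p i).mapMahlerMeasure v ^ 2 := by
        rw [prod_mul_distrib, prod_const, prod_pow, mapMahlerMeasure_prod]
    _ ≤ (K * 4 ^ K) ^ #s * ((∏ i ∈ s, p i).sum fun _ a => ‖a‖) ^ 2 := by
        gcongr
        · exact mapMahlerMeasure_nonneg _ v
        · exact mapMahlerMeasure_le_sum_norm_coeff _ v hv

end Polynomial

lemma le_max_of_prod_le_of_succ_eq_add {N : ℕ} {a δ : ℕ → ℝ} {B : ℝ}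
    (hstep : ∀ i, i + 1 < N → a (i + 1) = a i + δ i) (hprod : ∏ i ∈ range N, a i ≤ B)
    {i : ℕ} (hi : i < N) :
    a i ≤ max B (1 + 2 * ∑ j ∈ range N, |∑ l ∈ range j, δ l|) := by
  have hpartial : ∀ j < N, a j = a 0 + ∑ l ∈ range j, δ l := by
    intro j hj
    induction j with
    | zero => simp
    | succ j ih => rw [sum_range_succ, hstep j hj, ih (by omega), add_assoc]
  have hbound : ∀ j < N, |∑ l ∈ range j, δ l| ≤ ∑ j ∈ range N, |∑ l ∈ range j, δ l| :=
    fun j hj => single_le_sum (f := fun j => |∑ l ∈ range j, δ l|)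
      (fun _ _ => abs_nonneg _) (mem_range.2 hj)
  by_cases hlarge : ∀ j < N, 1 ≤ a j
  · refine le_max_of_le_left (le_trans ?_ hprod)
    rw [← mul_prod_erase _ _ (mem_range.2 hi)]
    refine le_mul_of_one_le_right (by linarith [hlarge i hi]) (one_le_prod fun j hj => ?_)
    exact hlarge j (mem_range.1 (mem_of_mem_erase hj))
  · push Not at hlarge
    obtain ⟨j, hj, hsmall⟩ := hlarge
    refine le_max_of_le_right ?_
    rw [hpartial i hi]
    linarith [hpartial j hj, hbound i hi, hbound j hj, le_abs_self (∑ l ∈ range i, δ l),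
      neg_abs_le (∑ l ∈ range j, δ l)]

lemma sum_range_lt_add_sum_Ico {f : ℕ → ℕ} {a : ℕ} (h : f 0 < a) (N : ℕ) :
    ∑ i ∈ range N, f i < a + ∑ i ∈ Ico 1 N, f i := by
  rcases N.eq_zero_or_pos with rfl | hN
  · simpa using Nat.zero_lt_of_lt h
  · rw [sum_range_eq_add_Ico _ hN]
    omega

section lcnPoly

variable (k s : ℕ → ℕ) (w : ℕ → ℕ → ℝ)

lemma coeff_lcnPoly (i n : ℕ) :
    (lcnPoly k s w i).coeff n =
      ∑ j ∈ range (k i), if n = j * ∏ m ∈ range i, s m then w i j else 0 := by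
  simp only [lcnPoly, finsetSum_coeff, coeff_C_mul_X_pow]

lemma natDegree_lcnPoly_le (i : ℕ) :
    (lcnPoly k s w i).natDegree ≤ (k i - 1) * ∏ m ∈ range i, s m := by
  refine natDegree_sum_le_of_forall_le _ _ fun j hj => ?_
  grw [natDegree_C_mul_le, natDegree_X_pow]
  exact Nat.mul_le_mul_right _ (by simp at hj; omega)

variable {k s}

lemma sum_sq_coeff_lcnPoly (hs : ∀ m, 1 ≤ s m) {i K : ℕ}
    (hK : (k i - 1) * ∏ m ∈ range i, s m < K) :
    ∑ n ∈ range K, (lcnPoly k s w i).coeff n ^ 2 = ∑ j ∈ range (k i), w i j ^ 2 := by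
  set P := ∏ m ∈ range i, s m
  have hP : 0 < P := prod_pos fun m _ => hs m
  have hinj : Set.InjOn (· * P) (range (k i)) := fun a _ b _ h => Nat.eq_of_mul_eq_mul_right hP h
  have hsub : (range (k i)).image (· * P) ⊆ range K := by
    intro n hn
    simp only [mem_image, mem_range] at hn ⊢
    obtain ⟨j, hj, rfl⟩ := hn
    exact lt_of_le_of_lt (Nat.mul_le_mul_right _ (by omega)) hK
  have hcoeff (j : ℕ) (hj : j ∈ range (k i)) : (lcnPoly k s w i).coeff (j * P) = w i j := by
    refine (coeff_lcnPoly k s w i _).trans ((sum_eq_single_of_mem j hj ?_).trans (if_pos rfl))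
    exact fun b hb hbj => if_neg fun h => hbj (hinj hb hj h.symm)
  have hzero (n : ℕ) (hn : n ∉ (range (k i)).image (· * P)) : (lcnPoly k s w i).coeff n = 0 := by
    rw [coeff_lcnPoly]
    exact sum_eq_zero fun j hj => if_neg fun h => hn (mem_image.2 ⟨j, hj, h.symm⟩)
  calc ∑ n ∈ range K, (lcnPoly k s w i).coeff n ^ 2
      = ∑ n ∈ (range (k i)).image (· * P), (lcnPoly k s w i).coeff n ^ 2 :=
        (sum_subset hsub fun n _ hn => by rw [hzero n hn, sq, zero_mul]).symm
    _ = ∑ j ∈ range (k i), w i j ^ 2 := by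
        rw [sum_image hinj]
        exact sum_congr rfl fun j hj => by rw [hcoeff j hj]

end lcnPoly

theorem stmt_9_general (T : ℝ) (kv N : ℕ) (δ : ℕ → ℝ) :
    ∃ τ : ℝ, ∀ (k s : ℕ → ℕ) (w : ℕ → ℕ → ℝ),
      (∀ i, 1 ≤ k i) → (∀ i, 1 ≤ s i) →
      kv = k 0 + ∑ i ∈ Finset.Ico 1 N, (k i - 1) * ∏ m ∈ Finset.range i, s m →
      (∀ i, i + 1 < N →
        δ i = (∑ n ∈ Finset.range (k (i + 1)), (w (i + 1) n) ^ 2) -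
          ∑ n ∈ Finset.range (k i), (w i n) ^ 2) →
      (∑ n ∈ Finset.range kv, |(∏ i ∈ Finset.range N, lcnPoly k s w i).coeff n|) ≤ T →
      ∀ i < N, (∑ n ∈ Finset.range (k i), (w i n) ^ 2) ≤ τ := by
  refine ⟨max ((kv * 4 ^ kv) ^ N * T ^ 2) (1 + 2 * ∑ j ∈ range N, |∑ l ∈ range j, δ l|), ?_⟩
  intro k s w hk hs hkv hδ hT i hi
  have hwidth : ∑ j ∈ range N, (k j - 1) * ∏ m ∈ range j, s m < kv :=
    hkv ▸ sum_range_lt_add_sum_Ico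
      (by rw [prod_range_zero, mul_one]; exact Nat.sub_lt (hk 0) one_pos) N
  have hwidth_le (j : ℕ) (hj : j < N) : (k j - 1) * ∏ m ∈ range j, s m < kv :=
    (single_le_sum (fun _ _ => Nat.zero_le _) (mem_range.2 hj)).trans_lt hwidth
  have hdeg_prod : (∏ j ∈ range N, lcnPoly k s w j).natDegree < kv :=
    (natDegree_prod_le _ _).trans_lt
      ((sum_le_sum fun j _ => natDegree_lcnPoly_le k s w j).trans_lt hwidth)
  have hprod := prod_sum_norm_sq_coeff_le (v := Complex.ofRealHom) Complex.isometry_ofReal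
    (range N) (lcnPoly k s w) fun j hj =>
      (natDegree_lcnPoly_le k s w j).trans_lt (hwidth_le j (mem_range.1 hj))
  rw [sum_over_range' _ (fun _ => norm_zero) kv hdeg_prod, card_range] at hprod
  simp only [Real.norm_eq_abs, sq_abs] at hprod
  refine le_max_of_prod_le_of_succ_eq_add (a := fun j => ∑ n ∈ range (k j), w j n ^ 2)
    (fun j hj => by linarith [hδ j hj]) ?_ hi
  calc ∏ j ∈ range N, ∑ n ∈ range (k j), w j n ^ 2
      = ∏ j ∈ range N, ∑ n ∈ range kv, (lcnPoly k s w j).coeff n ^ 2 :=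
        prod_congr rfl fun j hj =>
          (sum_sq_coeff_lcnPoly w hs (hwidth_le j (mem_range.1 hj))).symm
    _ ≤ _ := hprod
    _ ≤ (kv * 4 ^ kv) ^ N * T ^ 2 := by gcongr

/-- If the final filter of an LCN satisfies `‖π(w)‖₁ ≤ T` and
`δ_i = ‖w^(i+1)‖₂² - ‖w^(i)‖₂²`, then there is a constant `τ` depending only on
`T`, the final width `k_v` (and the data `N, δ_1, …, δ_{N-1}`) such that
`‖w^(i)‖₂² ≤ τ` for all `i`. -/
theorem stmt_9 (T : ℝ) (kv N : ℕ) (hN : 1 ≤ N) (δ : ℕ → ℝ) :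
    ∃ τ : ℝ, ∀ (k s : ℕ → ℕ) (w : ℕ → ℕ → ℝ),
      (∀ i, 1 ≤ k i) → (∀ i, 1 ≤ s i) →
      kv = k 0 + ∑ i ∈ Finset.Ico 1 N, (k i - 1) * ∏ m ∈ Finset.range i, s m →
      (∀ i, i + 1 < N →
        δ i = (∑ n ∈ Finset.range (k (i + 1)), (w (i + 1) n) ^ 2) -
          ∑ n ∈ Finset.range (k i), (w i n) ^ 2) →
      (∑ n ∈ Finset.range kv, |(∏ i ∈ Finset.range N, lcnPoly k s w i).coeff n|) ≤ T →
      ∀ i < N, (∑ n ∈ Finset.range (k i), (w i n) ^ 2) ≤ τ :=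
  stmt_9_general T kv N δ
end

section
/- For the generalized Huber loss ℓ_GH(x,y) = (1/α) Σ_{i=1}^n log(e^{α(x-y)_i} + e^{-α(x-y)_i} + β) with α > 0 and β ∈ (-2, 0), we have ‖x - y‖_1 ≤ ℓ_GH(x, y) + (n/α) · log(2/(2+β)) for all x, y ∈ ℝ^n; and for β ≥ 0 we have ‖x - y‖_1 ≤ ℓ_GH(x, y). -/
lemma aux_two_le (u : ℝ) : 2 ≤ Real.exp u + Real.exp (-u) := by
  have h1 : Real.exp u * Real.exp (-u) = 1 := by
    rw [← Real.exp_add]; simp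
  nlinarith [sq_nonneg (Real.exp u - Real.exp (-u)), Real.exp_pos u, Real.exp_pos (-u)]

lemma aux_abs_le (u : ℝ) : Real.exp |u| ≤ Real.exp u + Real.exp (-u) := by
  rcases abs_cases u with ⟨h, _⟩ | ⟨h, _⟩ <;> rw [h] <;>
    [exact le_add_of_nonneg_right (Real.exp_pos _).le;
     exact le_add_of_nonneg_left (Real.exp_pos _).le]

/-- pointwise bound, β < 0 case -/
lemma aux_pt_neg (α β t : ℝ) (hβ : -2 < β) (hβ0 : β < 0) :
    α * |t| ≤ Real.log (Real.exp (α * t) + Real.exp (-(α * t)) + β)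
      + Real.log (2 / (2 + β)) := by
  set s := Real.exp (α * t) + Real.exp (-(α * t)) with hs
  have h2 : 2 ≤ s := aux_two_le (α * t)
  have habs : Real.exp |α * t| ≤ s := aux_abs_le (α * t)
  have hβpos : (0:ℝ) < 2 + β := by linarith
  have hkey : Real.exp |α * t| * ((2 + β) / 2) ≤ s + β := by
    nlinarith [Real.exp_pos |α * t|]
  have hposL : (0:ℝ) < Real.exp |α * t| * ((2 + β) / 2) := by positivity
  have := Real.log_le_log hposL hkey
  rw [Real.log_mul (Real.exp_pos _).ne' (by positivity), Real.log_exp] at this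
  have heq : Real.log (2 / (2 + β)) = - Real.log ((2 + β) / 2) := by
    rw [← Real.log_inv]; norm_num
  have habs' : α * |t| ≤ |α * t| := by
    rw [abs_mul]
    rcases le_or_gt 0 α with h | h
    · rw [abs_of_nonneg h]
    · have : 0 ≤ |α| * |t| := by positivity
      nlinarith [abs_nonneg t]
  linarith

/-- pointwise bound, β ≥ 0 case -/
lemma aux_pt_nonneg (α β t : ℝ) (hβ0 : 0 ≤ β) :
    α * |t| ≤ Real.log (Real.exp (α * t) + Real.exp (-(α * t)) + β) := by
  have habs : Real.exp |α * t| ≤ Real.exp (α * t) + Real.exp (-(α * t)) + β := by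
    linarith [aux_abs_le (α * t)]
  have := Real.log_le_log (Real.exp_pos _) habs
  rw [Real.log_exp] at this
  have habs' : α * |t| ≤ |α * t| := by
    rw [abs_mul]
    rcases le_or_gt 0 α with h | h
    · rw [abs_of_nonneg h]
    · have : 0 ≤ |α| * |t| := by positivity
      nlinarith [abs_nonneg t]
  linarith

/-- For the generalized Huber loss
`ℓ_GH(x,y) = (1/α) ∑ᵢ log(e^{α(x-y)ᵢ} + e^{-α(x-y)ᵢ} + β)` with `α > 0`, `β > -2`:
if `β < 0` then `‖x - y‖₁ ≤ ℓ_GH(x,y) + (n/α) log(2/(2+β))`,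
and if `β ≥ 0` then `‖x - y‖₁ ≤ ℓ_GH(x,y)`. -/
theorem stmt_16 (n : ℕ) (α β : ℝ) (hα : 0 < α) (hβ : -2 < β) (x y : Fin n → ℝ) :
    (β < 0 →
      (∑ i, |x i - y i|) ≤
        (1 / α) * (∑ i, Real.log (Real.exp (α * (x i - y i)) +
            Real.exp (-(α * (x i - y i))) + β)) +
          (n / α) * Real.log (2 / (2 + β))) ∧
    (0 ≤ β →
      (∑ i, |x i - y i|) ≤
        (1 / α) * ∑ i, Real.log (Real.exp (α * (x i - y i)) +
            Real.exp (-(α * (x i - y i))) + β)) := by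
  constructor
  · intro hβ0
    have hmain : (∑ i, |x i - y i|) * α ≤
        (∑ i, Real.log (Real.exp (α * (x i - y i)) +
            Real.exp (-(α * (x i - y i))) + β)) + n * Real.log (2 / (2 + β)) := by
      rw [Finset.sum_mul]
      calc ∑ i, |x i - y i| * α
          ≤ ∑ i, (Real.log (Real.exp (α * (x i - y i)) +
            Real.exp (-(α * (x i - y i))) + β) + Real.log (2 / (2 + β))) := by
            apply Finset.sum_le_sum
            intro i _
            have := aux_pt_neg α β (x i - y i) hβ hβ0
            linarith [this]
        _ = _ := by
            rw [Finset.sum_add_distrib, Finset.sum_const, Finset.card_univ,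
              Fintype.card_fin, nsmul_eq_mul]
    have heq : (1 / α) * (∑ i, Real.log (Real.exp (α * (x i - y i)) +
            Real.exp (-(α * (x i - y i))) + β)) + (n / α) * Real.log (2 / (2 + β)) =
        ((∑ i, Real.log (Real.exp (α * (x i - y i)) +
            Real.exp (-(α * (x i - y i))) + β)) + n * Real.log (2 / (2 + β))) / α := by
      field_simp
    rw [heq, le_div_iff₀ hα]
    exact hmain
  · intro hβ0
    have hmain : (∑ i, |x i - y i|) * α ≤
        (∑ i, Real.log (Real.exp (α * (x i - y i)) +
            Real.exp (-(α * (x i - y i))) + β)) := by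
      rw [Finset.sum_mul]
      apply Finset.sum_le_sum
      intro i _
      have := aux_pt_nonneg α β (x i - y i) hβ0
      linarith
    rw [show (1 / α) * (∑ i, Real.log (Real.exp (α * (x i - y i)) +
            Real.exp (-(α * (x i - y i))) + β)) =
        (∑ i, Real.log (Real.exp (α * (x i - y i)) +
            Real.exp (-(α * (x i - y i))) + β)) / α by ring, le_div_iff₀ hα]
    exact hmain
end
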